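/- The random incompatibility robustness equals the maximal random steering robustness within the SEO class: for every measurement assemblage {B_{a|x}} with |A| outcomes per setting and every full-rank density matrix ρ, SR^R(ρ^{1/2} B ρ^{1/2}) = IR^R(B). -/

import Mathlib

open Matrix Kronecker BigOperators ComplexOrder

noncomputable section

/-- A density matrix: positive semidefinite with unit trace. -/
def IsDensity {d : ℕ} (ρ : Matrix (Fin d) (Fin d) ℂ) : Prop :=
  ρ.PosSemidef ∧ ρ.trace = 1

/-- A POVM: positive semidefinite effects summing to the identity. -/
def IsPOVM {d nl : ℕ} (G : Fin nl → Matrix (Fin d) (Fin d) ℂ) : Prop :=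
  (∀ l, (G l).PosSemidef) ∧ ∑ l, G l = 1

/-- A measurement assemblage: for each setting `x`, a POVM `a ↦ M x a`. -/
def IsMA {d na nx : ℕ} (M : Fin nx → Fin na → Matrix (Fin d) (Fin d) ℂ) : Prop :=
  (∀ x a, (M x a).PosSemidef) ∧ ∀ x, ∑ a, M x a = 1

/-- Joint measurability: `M x a = ∑ λ p(a|x,λ) G λ` for a parent POVM `G`. -/
def JM {d na nx : ℕ} (M : Fin nx → Fin na → Matrix (Fin d) (Fin d) ℂ) : Prop :=
  ∃ (nl : ℕ) (G : Fin nl → Matrix (Fin d) (Fin d) ℂ)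
    (p : Fin nx → Fin na → Fin nl → ℝ),
    IsPOVM G ∧ (∀ x a l, 0 ≤ p x a l) ∧ (∀ x l, ∑ a, p x a l = 1) ∧
    ∀ x a, M x a = ∑ l, (p x a l : ℂ) • G l

/-- A state assemblage: PSD elements with an `x`-independent reduced density matrix. -/
def IsSA {d na nx : ℕ} (σ : Fin nx → Fin na → Matrix (Fin d) (Fin d) ℂ) : Prop :=
  (∀ x a, (σ x a).PosSemidef) ∧
  ∃ ρ : Matrix (Fin d) (Fin d) ℂ, IsDensity ρ ∧ ∀ x, ∑ a, σ x a = ρ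

/-- Local-hidden-state model: `σ x a = ∑ λ q(λ) p(a|x,λ) ρ_λ`. -/
def LHS {d na nx : ℕ} (σ : Fin nx → Fin na → Matrix (Fin d) (Fin d) ℂ) : Prop :=
  ∃ (nl : ℕ) (q : Fin nl → ℝ) (p : Fin nx → Fin na → Fin nl → ℝ)
    (ρ : Fin nl → Matrix (Fin d) (Fin d) ℂ),
    (∀ l, 0 ≤ q l) ∧ (∑ l, q l = 1) ∧
    (∀ x a l, 0 ≤ p x a l) ∧ (∀ x l, ∑ a, p x a l = 1) ∧
    (∀ l, IsDensity (ρ l)) ∧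
    ∀ x a, σ x a = ∑ l, ((q l * p x a l : ℝ) : ℂ) • ρ l

/-- Incompatibility robustness. -/
def IR {d na nx : ℕ} (B : Fin nx → Fin na → Matrix (Fin d) (Fin d) ℂ) : ℝ :=
  sInf {t : ℝ | 0 ≤ t ∧ ∃ N, IsMA N ∧
    JM (fun x a => (((1 + t : ℝ))⁻¹ : ℂ) • (B x a + (t : ℂ) • N x a))}

/-- Steering robustness. -/
def SR {d na nx : ℕ} (σ : Fin nx → Fin na → Matrix (Fin d) (Fin d) ℂ) : ℝ :=
  sInf {t : ℝ | 0 ≤ t ∧ ∃ ξ, IsSA ξ ∧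
    LHS (fun x a => (((1 + t : ℝ))⁻¹ : ℂ) • (σ x a + (t : ℂ) • ξ x a))}

/-- Incompatible weight. -/
def IW {d na nx : ℕ} (B : Fin nx → Fin na → Matrix (Fin d) (Fin d) ℂ) : ℝ :=
  sInf {t : ℝ | 0 ≤ t ∧ t ≤ 1 ∧ ∃ N O, IsMA N ∧ JM O ∧
    ∀ x a, B x a = (t : ℂ) • N x a + ((1 - t : ℝ) : ℂ) • O x a}

/-- Steerable weight. -/
def SW {d na nx : ℕ} (σ : Fin nx → Fin na → Matrix (Fin d) (Fin d) ℂ) : ℝ :=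
  sInf {t : ℝ | 0 ≤ t ∧ t ≤ 1 ∧ ∃ ξ τ, IsSA ξ ∧ LHS τ ∧
    ∀ x a, σ x a = (t : ℂ) • ξ x a + ((1 - t : ℝ) : ℂ) • τ x a}

/-- Positive map on matrices. -/
def PosMap {d : ℕ} (E : Matrix (Fin d) (Fin d) ℂ →ₗ[ℂ] Matrix (Fin d) (Fin d) ℂ) : Prop :=
  ∀ X, X.PosSemidef → (E X).PosSemidef

/-- Trace-nonincreasing on PSD matrices. -/
def TNI {d : ℕ} (E : Matrix (Fin d) (Fin d) ℂ →ₗ[ℂ] Matrix (Fin d) (Fin d) ℂ) : Prop :=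
  ∀ X : Matrix (Fin d) (Fin d) ℂ, X.PosSemidef → (E X).trace.re ≤ X.trace.re

/-- `Ed` is the Hilbert–Schmidt adjoint of `E`. -/
def IsAdjoint {d : ℕ} (E Ed : Matrix (Fin d) (Fin d) ℂ →ₗ[ℂ] Matrix (Fin d) (Fin d) ℂ) : Prop :=
  ∀ X Y, ((E X)ᴴ * Y).trace = (Xᴴ * (Ed Y)).trace

/-- Partial trace over the first tensor factor. -/
def ptraceA {d d' : ℕ} (M : Matrix (Fin d × Fin d') (Fin d × Fin d') ℂ) :
    Matrix (Fin d') (Fin d') ℂ :=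
  Matrix.of fun i j => ∑ k : Fin d, M (k, i) (k, j)

/-- The map `E ⊗ id` acting on bipartite matrices. -/
def tensId {d d' : ℕ} (E : Matrix (Fin d) (Fin d) ℂ →ₗ[ℂ] Matrix (Fin d) (Fin d) ℂ)
    (M : Matrix (Fin d × Fin d') (Fin d × Fin d') ℂ) :
    Matrix (Fin d × Fin d') (Fin d × Fin d') ℂ :=
  Matrix.of fun p q => E (Matrix.of fun i k => M (i, p.2) (k, q.2)) p.1 q.1

/-- Random incompatibility robustness: noise is the trivial assemblage `I/|A|`. -/
def IRR {d na nx : ℕ} (B : Fin nx → Fin na → Matrix (Fin d) (Fin d) ℂ) : ℝ :=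
  sInf {t : ℝ | 0 ≤ t ∧
    JM (fun x a => (((1 + t : ℝ))⁻¹ : ℂ) •
      (B x a + (t : ℂ) • (((na : ℝ)⁻¹ : ℝ) : ℂ) • (1 : Matrix (Fin d) (Fin d) ℂ)))}

/-- Random steering robustness: noise is `ρ_B/|A|` with `ρ_B` the reduced state. -/
def SRR {d na nx : ℕ} (σ : Fin nx → Fin na → Matrix (Fin d) (Fin d) ℂ) : ℝ :=
  sInf {t : ℝ | 0 ≤ t ∧
    LHS (fun x a => (((1 + t : ℝ))⁻¹ : ℂ) •
      (σ x a + (t : ℂ) • (((na : ℝ)⁻¹ : ℝ) : ℂ) • ∑ b, σ x b))}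

/-- The square root of a positive semidefinite matrix (removed from Mathlib; old definition). -/
def Matrix.PosSemidef.sqrt {n 𝕜 : Type*} [Fintype n] [DecidableEq n] [RCLike 𝕜]
    {A : Matrix n n 𝕜} (hA : A.PosSemidef) : Matrix n n 𝕜 :=
  (hA.1.eigenvectorUnitary : Matrix n n 𝕜) *
    diagonal ((↑) ∘ (Real.sqrt ·) ∘ hA.1.eigenvalues) *
    (star hA.1.eigenvectorUnitary : Matrix n n 𝕜)

/-!
Conjugation `X ↦ Sᴴ * X * S` by an invertible `S` with `tr (Sᴴ * S) = 1` transports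
joint-measurability models to local-hidden-state models: a parent POVM `G` becomes the
unnormalised hidden states `Sᴴ * G λ * S`, whose total is the reduced state `Sᴴ * S`, and
conjugating by `S⁻¹` reverses this. Since `Sᴴ * (I / |A|) * S = (Sᴴ * S) / |A|`, conjugation
turns the white-noise mixture `(B + t I / |A|) / (1 + t)` into `(σ + t ρ_B / |A|) / (1 + t)`,
so the sets of admissible `t` defining `IR^R(B)` and `SR^R(Sᴴ B S)` coincide. For `S = ρ^{1/2}`
this is the theorem.
-/

namespace Matrix.PosSemidef

variable {n 𝕜 : Type*} [Fintype n] [DecidableEq n] [RCLike 𝕜] {A : Matrix n n 𝕜}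

lemma isHermitian_sqrt (hA : A.PosSemidef) : hA.sqrt.IsHermitian := by
  rw [sqrt, star_eq_conjTranspose]
  refine isHermitian_mul_mul_conjTranspose _ (isHermitian_diagonal_of_self_adjoint _ ?_)
  ext i
  simp

lemma sqrt_mul_sqrt (hA : A.PosSemidef) : hA.sqrt * hA.sqrt = A := by
  set U := hA.1.eigenvectorUnitary
  set D : Matrix n n 𝕜 := diagonal ((↑) ∘ (Real.sqrt ·) ∘ hA.1.eigenvalues)
  have hD : D * D = diagonal (RCLike.ofReal ∘ hA.1.eigenvalues) := by
    rw [diagonal_mul_diagonal]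
    congr 1
    ext i
    simp [← RCLike.ofReal_mul, Real.mul_self_sqrt (hA.eigenvalues_nonneg i)]
  calc (U : Matrix n n 𝕜) * D * (star U : Matrix n n 𝕜) * (U * D * (star U : Matrix n n 𝕜))
        = U * (D * ((star U : Matrix n n 𝕜) * U) * D) * (star U : Matrix n n 𝕜) := by
        simp only [Matrix.mul_assoc]
    _ = A := by
      rw [Unitary.coe_star_mul_self, Matrix.mul_one, hD]
      conv_rhs => rw [hA.1.spectral_theorem, Unitary.conjStarAlgAut_apply]

end Matrix.PosSemidef

lemma Matrix.mul_sum_smul_mul {n ι R : Type*} [Fintype n] [Fintype ι] [CommSemiring R]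
    (A B : Matrix n n R) (c : ι → R) (X : ι → Matrix n n R) :
    A * (∑ i, c i • X i) * B = ∑ i, c i • (A * X i * B) := by
  simp only [Matrix.mul_sum, Matrix.sum_mul, Matrix.mul_smul, Matrix.smul_mul]

lemma Matrix.PosSemidef.exists_isDensity_smul {d : ℕ} {T ρ₀ : Matrix (Fin d) (Fin d) ℂ}
    (hT : T.PosSemidef) (hρ₀ : IsDensity ρ₀) :
    ∃ ρ, IsDensity ρ ∧ T = (T.trace.re : ℂ) • ρ := by
  have htr : (T.trace.re : ℂ) = T.trace := by
    rw [Complex.ext_iff]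
    exact ⟨rfl, (Complex.nonneg_iff.1 hT.trace_nonneg).2⟩
  by_cases h0 : T.trace.re = 0
  · refine ⟨ρ₀, hρ₀, ?_⟩
    rw [h0, Complex.ofReal_zero, zero_smul, ← hT.trace_eq_zero_iff, ← htr, h0, Complex.ofReal_zero]
  · have h0' : (T.trace.re : ℂ) ≠ 0 := Complex.ofReal_ne_zero.2 h0
    refine ⟨(T.trace.re : ℂ)⁻¹ • T, ⟨hT.smul ?_, ?_⟩, ?_⟩
    · exact inv_nonneg.2 (Complex.zero_le_real.2 (Complex.nonneg_iff.1 hT.trace_nonneg).1)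
    · rw [trace_smul, smul_eq_mul, inv_mul_eq_one₀ h0', htr]
    · rw [smul_smul, mul_inv_cancel₀ h0', one_smul]

section Assemblages

variable {d na nx : ℕ}

lemma LHS_conjTranspose_mul_mul_of_JM {M : Fin nx → Fin na → Matrix (Fin d) (Fin d) ℂ}
    {S : Matrix (Fin d) (Fin d) ℂ} (hS : (Sᴴ * S).trace = 1) (hM : JM M) :
    LHS (fun x a => Sᴴ * M x a * S) := by
  obtain ⟨nl, G, p, hG, hp0, hp1, hMG⟩ := hM
  have hT l : (Sᴴ * G l * S).PosSemidef := (hG.1 l).conjTranspose_mul_mul_same S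
  have hρ₀ : IsDensity (Sᴴ * S) := ⟨posSemidef_conjTranspose_mul_self S, hS⟩
  choose ρ hρ hTρ using fun l => (hT l).exists_isDensity_smul hρ₀
  set q := fun l => (Sᴴ * G l * S).trace.re
  refine ⟨nl, q, p, ρ, fun l => (Complex.nonneg_iff.1 (hT l).trace_nonneg).1, ?_, hp0, hp1, hρ,
    fun x a => ?_⟩
  · have hsum : ∑ l, Sᴴ * G l * S = Sᴴ * S := by
      rw [← Matrix.sum_mul, ← Matrix.mul_sum, hG.2, Matrix.mul_one]
    simp only [q, ← Complex.re_sum, ← trace_sum, hsum, hS, Complex.one_re]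
  · simp only [hMG, mul_sum_smul_mul]
    refine Finset.sum_congr rfl fun l _ => ?_
    rw [hTρ l, smul_smul, Complex.ofReal_mul, mul_comm]

lemma JM_of_LHS_conjTranspose_mul_mul {M : Fin nx → Fin na → Matrix (Fin d) (Fin d) ℂ}
    {S : Matrix (Fin d) (Fin d) ℂ} (hS : IsUnit S) (hM : ∀ x, ∑ a, M x a = 1)
    (h : LHS (fun x a => Sᴴ * M x a * S)) : JM M := by
  rcases isEmpty_or_nonempty (Fin nx) with _ | ⟨⟨x₀⟩⟩
  · exact ⟨1, fun _ => 1, isEmptyElim, ⟨fun _ => PosSemidef.one, by simp⟩,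
      isEmptyElim, isEmptyElim, isEmptyElim⟩
  obtain ⟨nl, q, p, ρ, hq0, -, hp0, hp1, hρ, hσ⟩ := h
  beta_reduce at hσ
  set R := S⁻¹
  have hR X : Rᴴ * (Sᴴ * X * S) * R = X := by
    have hSR : S * R = 1 := mul_nonsing_inv S ((isUnit_iff_isUnit_det S).1 hS)
    calc Rᴴ * (Sᴴ * X * S) * R = (S * R)ᴴ * X * (S * R) := by
          simp only [conjTranspose_mul, Matrix.mul_assoc]
      _ = X := by rw [hSR, conjTranspose_one, Matrix.one_mul, Matrix.mul_one]
  -- the hidden states average to the reduced state `Sᴴ * S`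
  have hmarg : ∑ l, (q l : ℂ) • ρ l = Sᴴ * 1 * S := by
    calc ∑ l, (q l : ℂ) • ρ l = ∑ l, ∑ a, ((q l * p x₀ a l : ℝ) : ℂ) • ρ l := by
          refine Finset.sum_congr rfl fun l _ => ?_
          rw [← Finset.sum_smul, ← Complex.ofReal_sum, ← Finset.mul_sum, hp1, mul_one]
      _ = Sᴴ * 1 * S := by
          rw [Finset.sum_comm, ← hM x₀, Matrix.mul_sum, Matrix.sum_mul]
          exact Finset.sum_congr rfl fun a _ => (hσ x₀ a).symm
  refine ⟨nl, fun l => (q l : ℂ) • (Rᴴ * ρ l * R), p, ⟨fun l => ?_, ?_⟩, hp0, hp1, fun x a => ?_⟩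
  · exact ((hρ l).1.conjTranspose_mul_mul_same R).smul (Complex.zero_le_real.2 (hq0 l))
  · rw [← mul_sum_smul_mul, hmarg, hR]
  · rw [← hR (M x a), hσ x a, mul_sum_smul_mul]
    refine Finset.sum_congr rfl fun l _ => ?_
    rw [smul_smul, Complex.ofReal_mul, mul_comm]

end Assemblages

def mixWhiteNoise {n : Type*} [Fintype n] [DecidableEq n] {na : ℕ} (t : ℝ)
    (E : Fin na → Matrix n n ℂ) (a : Fin na) : Matrix n n ℂ :=
  (((1 + t : ℝ))⁻¹ : ℂ) • (E a + (t : ℂ) • (((na : ℝ)⁻¹ : ℝ) : ℂ) • 1)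

section WhiteNoise

variable {n : Type*} [Fintype n] [DecidableEq n] {na : ℕ} {E : Fin na → Matrix n n ℂ}

lemma sum_mixWhiteNoise (hE : ∑ a, E a = 1) {t : ℝ} (ht : 0 ≤ t) :
    ∑ a, mixWhiteNoise t E a = 1 := by
  rcases eq_or_ne na 0 with rfl | hna
  · -- with no outcomes `hE` says `0 = 1`, so the matrix ring is trivial
    have := subsingleton_of_zero_eq_one (by simpa using hE)
    exact Subsingleton.elim _ _
  have h1t : ((1 + t : ℝ) : ℂ) ≠ 0 := by exact_mod_cast (by linarith : (1 + t : ℝ) ≠ 0)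
  have hnoise : (t : ℂ) * (((na : ℝ)⁻¹ : ℝ) : ℂ) * na = t := by
    push_cast
    field_simp
  simp only [mixWhiteNoise, ← Finset.smul_sum, Finset.sum_add_distrib, hE, Finset.sum_const,
    Finset.card_univ, Fintype.card_fin, smul_smul, ← Nat.cast_smul_eq_nsmul ℂ, hnoise]
  rw [← one_smul ℂ (1 : Matrix n n ℂ), smul_smul, ← add_smul, smul_smul, mul_one]
  push_cast at h1t ⊢
  rw [inv_mul_cancel₀ h1t, one_smul]

lemma conjTranspose_mul_mixWhiteNoise_mul (hE : ∑ a, E a = 1) (S : Matrix n n ℂ) (t : ℝ)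
    (a : Fin na) :
    Sᴴ * mixWhiteNoise t E a * S = (((1 + t : ℝ))⁻¹ : ℂ) •
      (Sᴴ * E a * S + (t : ℂ) • (((na : ℝ)⁻¹ : ℝ) : ℂ) • ∑ b, Sᴴ * E b * S) := by
  rw [← Matrix.sum_mul, ← Matrix.mul_sum, hE, mixWhiteNoise]
  simp only [Matrix.mul_smul, Matrix.smul_mul, Matrix.mul_add, Matrix.add_mul]

end WhiteNoise

lemma SRR_conjTranspose_mul_mul_eq_IRR {d na nx : ℕ}
    {B : Fin nx → Fin na → Matrix (Fin d) (Fin d) ℂ} (hB : ∀ x, ∑ a, B x a = 1)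
    {S : Matrix (Fin d) (Fin d) ℂ} (hS : IsUnit S) (hS1 : (Sᴴ * S).trace = 1) :
    SRR (fun x a => Sᴴ * B x a * S) = IRR B := by
  unfold SRR IRR
  congr 1
  ext t
  refine and_congr_right fun ht => ?_
  have hmix : (fun x a => (((1 + t : ℝ))⁻¹ : ℂ) •
      (Sᴴ * B x a * S + (t : ℂ) • (((na : ℝ)⁻¹ : ℝ) : ℂ) • ∑ b, Sᴴ * B x b * S)) =
      fun x a => Sᴴ * mixWhiteNoise t (B x) a * S := by
    funext x a
    exact (conjTranspose_mul_mixWhiteNoise_mul (hB x) S t a).symm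
  rw [hmix]
  exact ⟨JM_of_LHS_conjTranspose_mul_mul hS fun x => sum_mixWhiteNoise (hB x) ht,
    LHS_conjTranspose_mul_mul_of_JM hS1⟩

/-- SR^R(ρ^{1/2} B ρ^{1/2}) = IR^R(B) for every full-rank density ρ. -/
theorem srr_eq_irr {d na nx : ℕ}
    (B : Fin nx → Fin na → Matrix (Fin d) (Fin d) ℂ) (hB : IsMA B)
    (ρ : Matrix (Fin d) (Fin d) ℂ) (hρ : ρ.PosDef) (hρ1 : ρ.trace = 1) :
    SRR (fun x a => hρ.posSemidef.sqrt * B x a * hρ.posSemidef.sqrt) = IRR B := by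
  have hsH := hρ.posSemidef.isHermitian_sqrt
  have hss := hρ.posSemidef.sqrt_mul_sqrt
  have hunit : IsUnit hρ.posSemidef.sqrt := isUnit_of_mul_isUnit_left (hss ▸ hρ.isUnit)
  have h := SRR_conjTranspose_mul_mul_eq_IRR hB.2 hunit (by rw [hsH.eq, hss, hρ1])
  rwa [hsH.eq] at h
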